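/- Assume Situation (*): d > 0 and 2 ≤ e_1 ≤ e_2 ≤ e_3 ≤ e_4 ≤ d with 2d − 2 = Σ_{i=1}^4 (e_i − 1), and let (σ_1, σ_2, σ_3, σ_4) be a Hurwitz factorization for (d, 4, 0, (e_1, e_2, e_3, e_4)). Then σ_3 and σ_4 are not disjoint; the set S given by the intersection of the supports of σ_3, σ_4 and σ_3σ_4 has at most 2 elements; the number of cycles in the decomposition of σ_3σ_4 into disjoint cycles equals the cardinality of S; and the support of each of these disjoint cycles contains exactly one element of S. -/

import Mathlib

/-!
For permutations `a, b` with `M = supp a ∩ supp b` and `U = supp a ∪ supp b`, every point of `U`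
fixed by `ab` lies in `M`; counting gives `|S| + 2|U| = |supp a| + |supp b| + |supp ab|` for
`S = M ∩ supp ab`. The products `σ₃σ₄` and `σ₁σ₂` are mutually inverse, so they have the same
support `T ⊆ U ∩ U'`, while transitivity forces `U ∪ U' = {1, …, d}`. Adding the two counts to
`Σ eᵢ = 2d + 2` yields `|S| + |S'| ≤ 2`. If `σ₃, σ₄` were disjoint, then `U ⊆ U'` would force
`U' = {1, …, d}` and `M' = ∅` (as `e₁ + e₂ ≤ e₃ + e₄ ≤ d`), contradicting the count.

A cycle of the product of two cycles `a, b` with `M ≠ ∅` that misses `M` would coincide with `a`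
or with `b`; so every cycle of `σ₃σ₄` meets both `S` and, when `M' ≠ ∅`, `S'`. Hence the number of
cycles is at most `|S|` and `|S'|`, which forces it to equal `|S|` (when `M' = ∅`, `σ₁σ₂` has
exactly two cycles), and then each cycle contains exactly one point of `S`.
-/

open Finset

namespace Equiv.Perm

variable {α : Type*} [DecidableEq α] [Fintype α]

theorem IsCycle.support_subset_of_mapsTo {c : Perm α} (hc : c.IsCycle) {P : Finset α} {x : α}
    (hxP : x ∈ P) (hx : x ∈ c.support) (hP : Set.MapsTo c P P) : c.support ⊆ P := by
  intro y hy
  obtain ⟨n, -, rfl⟩ := (hc.sameCycle (mem_support.mp hx) (mem_support.mp hy)).exists_pow_eq'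
  rw [← iterate_eq_pow]
  exact hP.iterate n hxP

theorem support_eq_biUnion_cycleFactorsFinset (f : Perm α) :
    f.support = f.cycleFactorsFinset.biUnion support := by
  conv_lhs => rw [← f.cycleFactorsFinset_noncommProd]
  exact support_noncommProd f.cycleFactorsFinset_pairwise_disjoint

theorem sum_card_support_inter_cycleFactorsFinset {f : Perm α} {S : Finset α}
    (hS : S ⊆ f.support) : ∑ c ∈ f.cycleFactorsFinset, #(c.support ∩ S) = #S := by
  rw [← card_biUnion, ← biUnion_inter, ← support_eq_biUnion_cycleFactorsFinset,
    inter_eq_right.mpr hS]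
  exact fun c hc d hd hcd =>
    ((f.cycleFactorsFinset_pairwise_disjoint hc hd hcd).disjoint_support).mono
      inter_subset_left inter_subset_left

theorem card_cycleFactorsFinset_le {f : Perm α} {S : Finset α} (hS : S ⊆ f.support)
    (hmeet : ∀ c ∈ f.cycleFactorsFinset, (c.support ∩ S).Nonempty) :
    #f.cycleFactorsFinset ≤ #S := by
  rw [card_eq_sum_ones, ← sum_card_support_inter_cycleFactorsFinset hS]
  exact sum_le_sum fun c hc => (hmeet c hc).card_pos

theorem card_support_inter_eq_one {f : Perm α} {S : Finset α} (hS : S ⊆ f.support)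
    (hmeet : ∀ c ∈ f.cycleFactorsFinset, (c.support ∩ S).Nonempty)
    (hcard : #f.cycleFactorsFinset = #S) :
    ∀ c ∈ f.cycleFactorsFinset, #(c.support ∩ S) = 1 := by
  rw [card_eq_sum_ones, ← sum_card_support_inter_cycleFactorsFinset hS,
    sum_eq_sum_iff_of_le fun c hc => (hmeet c hc).card_pos] at hcard
  exact fun c hc => (hcard c hc).symm

theorem mem_support_inter_of_mul_apply_eq {a b : Perm α} {x : α}
    (hx : x ∈ a.support ∪ b.support) (hfix : (a * b) x = x) : x ∈ a.support ∩ b.support := by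
  rw [mul_apply] at hfix
  rw [mem_union, mem_support, mem_support] at hx
  rw [mem_inter, mem_support, mem_support]
  by_cases hb : b x = x
  · rw [hb] at hfix
    tauto
  · exact ⟨fun ha => hb (a.injective (hfix.trans ha.symm)), hb⟩

theorem card_support_inter_mul_add_two_mul_card_union (a b : Perm α) :
    #(a.support ∩ b.support ∩ (a * b).support) + 2 * #(a.support ∪ b.support) =
      #a.support + #b.support + #(a * b).support := by
  set M := a.support ∩ b.support
  set U := a.support ∪ b.support
  set T := (a * b).support
  have hTU : T ⊆ U := support_mul_le a b
  have hMT : M \ T = U \ T := by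
    refine subset_antisymm (sdiff_subset_sdiff (inter_subset_left.trans subset_union_left) le_rfl)
      fun x hx => ?_
    obtain ⟨hxU, hxT⟩ := mem_sdiff.mp hx
    exact mem_sdiff.mpr ⟨mem_support_inter_of_mul_apply_eq hxU (notMem_support.mp hxT), hxT⟩
  have h1 : #(U \ T) + #T = #U := card_sdiff_add_card_eq_card hTU
  have h2 : #(M ∩ T) + #(M \ T) = #M := card_inter_add_card_sdiff M T
  have h3 : #U + #M = #a.support + #b.support := card_union_add_card_inter _ _
  rw [hMT] at h2
  omega

theorem IsCycle.support_inter_nonempty_of_mem_cycleFactorsFinset_mul {a b c : Perm α}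
    (ha : a.IsCycle) (hb : b.IsCycle) (hab : (a.support ∩ b.support).Nonempty)
    (hc : c ∈ (a * b).cycleFactorsFinset) :
    (c.support ∩ (a.support ∩ b.support ∩ (a * b).support)).Nonempty := by
  have hcT : c.support ⊆ (a * b).support := mem_cycleFactorsFinset_support_le hc
  by_contra hdisj
  have hM : ∀ x ∈ c.support, x ∈ a.support → b x = x := fun x hx hxa =>
    notMem_support.mp fun hxb =>
      hdisj ⟨x, mem_inter.mpr ⟨hx, mem_inter.mpr ⟨mem_inter.mpr ⟨hxa, hxb⟩, hcT hx⟩⟩⟩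
  obtain ⟨hcyc, hcf⟩ := mem_cycleFactorsFinset_iff.mp hc
  suffices c = a ∨ c = b by
    obtain ⟨x, hx⟩ := hab
    have hxc : x ∈ c.support := by
      rcases this with rfl | rfl
      exacts [(mem_inter.mp hx).1, (mem_inter.mp hx).2]
    exact hdisj ⟨x, mem_inter.mpr ⟨hxc, mem_inter.mpr ⟨hx, hcT hxc⟩⟩⟩
  by_cases hca : (c.support ∩ a.support).Nonempty
  · -- on `c.support ∩ a.support` the cycle `c` acts as `a`, so this set is `c`-stable
    left
    obtain ⟨x, hx⟩ := hca
    have hsub : c.support ⊆ a.support := by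
      refine (hcyc.support_subset_of_mapsTo hx (mem_inter.mp hx).1 fun y hy => ?_).trans
        inter_subset_right
      obtain ⟨hyc, hya⟩ := mem_inter.mp (mem_coe.mp hy)
      rw [mem_coe, mem_inter, apply_mem_support, hcf y hyc, mul_apply, hM y hyc hya,
        apply_mem_support]
      exact ⟨hyc, hya⟩
    refine hcyc.support_congr ha hsub fun x hx => ?_
    rw [hcf x hx, mul_apply, hM x hx (hsub hx)]
  · right
    have hnota : ∀ x ∈ c.support, x ∉ a.support := fun x hx hxa =>
      hca ⟨x, mem_inter.mpr ⟨hx, hxa⟩⟩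
    have hsub : c.support ⊆ b.support := fun x hx =>
      (mem_union.mp (support_mul_le a b (hcT hx))).resolve_left (hnota x hx)
    refine hcyc.support_congr hb hsub fun x hx => ?_
    have hbx : b x ∉ a.support := by
      rw [← apply_mem_support, ← mul_apply, ← hcf x hx]
      exact hnota _ (apply_mem_support.mpr hx)
    rw [hcf x hx, mul_apply, notMem_support.mp hbx]

theorem exists_mem_support_of_forall_exists_mem_closure [Nontrivial α] {ι : Type*}
    {σ : ι → Perm α} (htrans : ∀ x y, ∃ g ∈ Subgroup.closure (Set.range σ), g x = y) (x : α) :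
    ∃ i, x ∈ (σ i).support := by
  obtain ⟨y, hxy⟩ := exists_ne x
  by_contra! hfix
  have hle : Subgroup.closure (Set.range σ) ≤ MulAction.stabilizer (Perm α) x :=
    (Subgroup.closure_le _).mpr <| Set.range_subset_iff.mpr fun i => notMem_support.mp (hfix i)
  obtain ⟨g, hg, rfl⟩ := htrans x y
  exact hxy (hle hg)

section FourCycles

variable {a b a' b' : Perm α}

theorem support_mul_eq_of_mul_mul_eq_one (hprod : a' * b' * (a * b) = 1) :
    (a' * b').support = (a * b).support := by
  rw [eq_inv_of_mul_eq_one_left hprod, support_inv]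

theorem card_support_inter_mul_add_card_support_inter_mul_le (hprod : a' * b' * (a * b) = 1)
    (hcover : a.support ∪ b.support ∪ (a'.support ∪ b'.support) = univ) :
    #(a.support ∩ b.support ∩ (a * b).support) +
        #(a'.support ∩ b'.support ∩ (a' * b').support) + 2 * Fintype.card α ≤
      #a.support + #b.support + #a'.support + #b'.support := by
  have hT := support_mul_eq_of_mul_mul_eq_one hprod
  have hTU : (a * b).support ⊆ a.support ∪ b.support := support_mul_le a b
  have hTU' : (a * b).support ⊆ a'.support ∪ b'.support := hT ▸ support_mul_le a' b'
  have hUU' := card_union_add_card_inter (a.support ∪ b.support) (a'.support ∪ b'.support)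
  rw [hcover, card_univ] at hUU'
  have hTUU' := card_le_card (subset_inter hTU hTU')
  have hS := card_support_inter_mul_add_two_mul_card_union a b
  have hS' := card_support_inter_mul_add_two_mul_card_union a' b'
  rw [hT] at hS' ⊢
  omega

theorem not_disjoint_support_of_mul_mul_eq_one (hprod : a' * b' * (a * b) = 1)
    (hcover : a.support ∪ b.support ∪ (a'.support ∪ b'.support) = univ)
    (hle : #a'.support + #b'.support ≤ #a.support + #b.support)
    (hsum : 2 * Fintype.card α < #a.support + #b.support + #a'.support + #b'.support) :
    ¬_root_.Disjoint a.support b.support := by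
  intro hdisj
  have hT : (a' * b').support = a.support ∪ b.support := by
    rw [support_mul_eq_of_mul_mul_eq_one hprod,
      (disjoint_iff_disjoint_support.mpr hdisj).support_mul]
  have hU' : a'.support ∪ b'.support = univ := by
    rw [← hcover, eq_comm, union_eq_right, ← hT]
    exact support_mul_le a' b'
  have hU := card_union_of_disjoint hdisj
  have hM' := card_union_add_card_inter a'.support b'.support
  rw [hU', card_univ] at hM'
  have hUd := card_le_univ (a.support ∪ b.support)
  have hS'M' : #(a'.support ∩ b'.support ∩ (a' * b').support) ≤ #(a'.support ∩ b'.support) :=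
    card_le_card inter_subset_left
  have hS' := card_support_inter_mul_add_two_mul_card_union a' b'
  rw [hU', card_univ, hT] at hS'
  omega

theorem card_cycleFactorsFinset_mul_eq (ha : a.IsCycle) (hb : b.IsCycle) (ha' : a'.IsCycle)
    (hb' : b'.IsCycle) (hprod : a' * b' * (a * b) = 1) (hab : (a.support ∩ b.support).Nonempty)
    (hle : #(a.support ∩ b.support ∩ (a * b).support) +
      #(a'.support ∩ b'.support ∩ (a' * b').support) ≤ 2) :
    #(a * b).cycleFactorsFinset = #(a.support ∩ b.support ∩ (a * b).support) := by
  have hkS := card_cycleFactorsFinset_le inter_subset_right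
    fun c hc => ha.support_inter_nonempty_of_mem_cycleFactorsFinset_mul hb hab hc
  have hk : #(a' * b').cycleFactorsFinset = #(a * b).cycleFactorsFinset := by
    rw [eq_inv_of_mul_eq_one_left hprod]
    simpa [cycleType_def] using congrArg Multiset.card (cycleType_inv (a * b))
  by_cases hab' : (a'.support ∩ b'.support).Nonempty
  · have hkS' := card_cycleFactorsFinset_le inter_subset_right
      fun c hc => ha'.support_inter_nonempty_of_mem_cycleFactorsFinset_mul hb' hab' hc
    rcases Nat.eq_zero_or_pos #(a * b).cycleFactorsFinset with hk0 | hkpos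
    · rw [card_eq_zero, cycleFactorsFinset_eq_empty_iff] at hk0
      simp [hk0]
    · omega
  · have hdisj : a'.Disjoint b' := by
      rwa [disjoint_iff_disjoint_support, disjoint_iff_inter_eq_empty, ← not_nonempty_iff_eq_empty]
    have h2 : #(a' * b').cycleFactorsFinset = 2 := by
      simpa [cycleType_def, ha'.cycleFactorsFinset_eq_singleton,
        hb'.cycleFactorsFinset_eq_singleton] using congrArg Multiset.card hdisj.cycleType_mul
    omega

end FourCycles

end Equiv.Perm

/-- A Hurwitz factorization for `(d, r, 0, (e 0, …, e (r-1)))`. -/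
def HurwitzFactorization (d r : ℕ) (e : Fin r → ℕ)
    (σ : Fin r → Equiv.Perm (Fin d)) : Prop :=
  (∀ i, (σ i).IsCycle ∧ (σ i).support.card = e i) ∧
  (List.ofFn σ).prod = 1 ∧
  ∀ x y : Fin d, ∃ g ∈ Subgroup.closure (Set.range σ), g x = y

open Equiv.Perm

theorem hurwitz_four_sigma34_cycle_structure_general
    (d e1 e2 e3 e4 : ℕ)
    (h12 : e1 ≤ e2) (h23 : e2 ≤ e3) (h34 : e3 ≤ e4)
    (hsum : 2 * d - 2 = (e1 - 1) + (e2 - 1) + (e3 - 1) + (e4 - 1))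
    (σ : Fin 4 → Equiv.Perm (Fin d))
    (hσ : HurwitzFactorization d 4 ![e1, e2, e3, e4] σ) :
    ¬Disjoint (σ 2).support (σ 3).support ∧
    ((σ 2).support ∩ (σ 3).support ∩ (σ 2 * σ 3).support).card ≤ 2 ∧
    (σ 2 * σ 3).cycleFactorsFinset.card =
      ((σ 2).support ∩ (σ 3).support ∩ (σ 2 * σ 3).support).card ∧
    ∀ c ∈ (σ 2 * σ 3).cycleFactorsFinset,
      (c.support ∩ ((σ 2).support ∩ (σ 3).support ∩ (σ 2 * σ 3).support)).card = 1 := by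
  obtain ⟨hcyc, hprod, htrans⟩ := hσ
  have hprod' : σ 0 * σ 1 * (σ 2 * σ 3) = 1 := by
    simpa [List.ofFn_succ, mul_assoc] using hprod
  have he : #(σ 0).support = e1 ∧ #(σ 1).support = e2 ∧ #(σ 2).support = e3 ∧
      #(σ 3).support = e4 := ⟨(hcyc 0).2, (hcyc 1).2, (hcyc 2).2, (hcyc 3).2⟩
  have htwo (i : Fin 4) : 2 ≤ #(σ i).support := (hcyc i).1.two_le_card_support
  have : Nontrivial (Fin d) := Fin.nontrivial_iff_two_le.mpr <| by
    simpa using (htwo 0).trans (card_le_univ (σ 0).support)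
  have hcover : (σ 2).support ∪ (σ 3).support ∪ ((σ 0).support ∪ (σ 1).support) = univ :=
    eq_univ_of_forall fun x => by
      obtain ⟨i, hi⟩ := exists_mem_support_of_forall_exists_mem_closure htrans x
      fin_cases i <;> simp_all
  have hsum' : #(σ 2).support + #(σ 3).support + #(σ 0).support + #(σ 1).support =
      2 * Fintype.card (Fin d) + 2 := by
    -- `2 ≤ eᵢ` undoes the truncated subtractions in `hsum`
    have := htwo 0; have := htwo 1; have := htwo 2; have := htwo 3
    rw [Fintype.card_fin]
    omega
  have hS := card_support_inter_mul_add_card_support_inter_mul_le hprod' hcover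
  have hdisj := not_disjoint_support_of_mul_mul_eq_one hprod' hcover (by omega) (by omega)
  have hab := not_disjoint_iff_nonempty_inter.mp hdisj
  have hk := card_cycleFactorsFinset_mul_eq (hcyc 2).1 (hcyc 3).1 (hcyc 0).1 (hcyc 1).1 hprod' hab
    (by omega)
  have hmeet (c) (hc : c ∈ (σ 2 * σ 3).cycleFactorsFinset) :=
    (hcyc 2).1.support_inter_nonempty_of_mem_cycleFactorsFinset_mul (hcyc 3).1 hab hc
  exact ⟨hdisj, by omega, hk, card_support_inter_eq_one inter_subset_right hmeet hk⟩

/-- In Situation (*), for a Hurwitz factorization `(σ₁, σ₂, σ₃, σ₄)` for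
`(d, 4, 0, (e₁, e₂, e₃, e₄))`: `σ₃` and `σ₄` are not disjoint; the set `S` of points
in the supports of `σ₃`, `σ₄` and `σ₃σ₄` has at most two elements; the number of
disjoint cycles of `σ₃σ₄` equals the cardinality of `S`; and the support of each of
these cycles contains exactly one element of `S`. -/
theorem hurwitz_four_sigma34_cycle_structure
    (d e1 e2 e3 e4 : ℕ) (hd : 0 < d)
    (h1 : 2 ≤ e1) (h12 : e1 ≤ e2) (h23 : e2 ≤ e3) (h34 : e3 ≤ e4) (h4d : e4 ≤ d)
    (hsum : 2 * d - 2 = (e1 - 1) + (e2 - 1) + (e3 - 1) + (e4 - 1))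
    (σ : Fin 4 → Equiv.Perm (Fin d))
    (hσ : HurwitzFactorization d 4 ![e1, e2, e3, e4] σ) :
    ¬Disjoint (σ 2).support (σ 3).support ∧
    ((σ 2).support ∩ (σ 3).support ∩ (σ 2 * σ 3).support).card ≤ 2 ∧
    (σ 2 * σ 3).cycleFactorsFinset.card =
      ((σ 2).support ∩ (σ 3).support ∩ (σ 2 * σ 3).support).card ∧
    ∀ c ∈ (σ 2 * σ 3).cycleFactorsFinset,
      (c.support ∩ ((σ 2).support ∩ (σ 3).support ∩ (σ 2 * σ 3).support)).card = 1 :=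
  hurwitz_four_sigma34_cycle_structure_general d e1 e2 e3 e4 h12 h23 h34 hsum σ hσ
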